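/- Let F ⊆ ℝⁿ be a compact convex set with 0 in its interior. Then the proper exposed faces of the polar set F° are exactly the sets of the form G = {c ∈ N_F(x) : ⟨c, x⟩ = 1} for points x on the boundary of F; moreover, any such exposed face G has relative interior ri G = {c ∈ ri N_F(x) : ⟨c, x⟩ = 1}. -/

import Mathlib

open MeasureTheory Set

/-- The normal cone to a convex set `F` at a point `x`. -/
def normalCone {n : ℕ} (F : Set (EuclideanSpace ℝ (Fin n)))
    (x : EuclideanSpace ℝ (Fin n)) : Set (EuclideanSpace ℝ (Fin n)) :=
  {v | ∀ y ∈ F, (inner ℝ v (y - x) : ℝ) ≤ 0}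

/-- The polar of a set `F ⊆ ℝⁿ`. -/
def polarSet {n : ℕ} (F : Set (EuclideanSpace ℝ (Fin n))) : Set (EuclideanSpace ℝ (Fin n)) :=
  {c | ∀ x ∈ F, (inner ℝ c x : ℝ) ≤ 1}

/-!
An exposed face of `F°` in a direction `c ≠ 0` is where `⟪c, ·⟫` attains its maximum `M` over the
compact set `F°`; `M > 0` because `F` is bounded. The rescaled vector `x = M⁻¹ • c` satisfies
`⟪y, x⟫ ≤ 1` on `F°`, so `x ∈ F°° = F` by separation, and `x` lies on the boundary because the
maximiser pairs to `1` with it. Hence the face is `{y ∈ F° | ⟪y, x⟫ = 1}`, which is the slice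
`{c ∈ N_F(x) | ⟪c, x⟫ = 1}`. Conversely, a supporting hyperplane at a boundary point `x` puts a
point into that slice, so the slice is the face of `F°` exposed by `x`; it misses `0 ∈ F°`.

Since `0 ∈ int F`, `⟪c, x⟫ > 0` on `N_F(x) \ {0}`, so the normal cone is the cone over its slice
`G`. The map `c ↦ ⟪c, x⟫⁻¹ • c` is continuous near `G` and sends the affine span of the cone
into that of `G`, which transports relative neighbourhoods between the two.
-/

open Filter Topology
open scoped RealInnerProductSpace

theorem mem_intrinsicInterior_iff_mem_nhdsWithin {V : Type*} [AddCommGroup V] [Module ℝ V]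
    [TopologicalSpace V] {s : Set V} {c : V} :
    c ∈ intrinsicInterior ℝ s ↔ c ∈ s ∧ s ∈ 𝓝[affineSpan ℝ s] c := by
  refine ⟨fun hc => ⟨intrinsicInterior_subset hc, ?_⟩, fun ⟨hc, hs⟩ => ?_⟩
  · obtain ⟨y, hy, rfl⟩ := hc
    exact preimage_coe_mem_nhds_subtype.1 (mem_interior_iff_mem_nhds.1 hy)
  · exact ⟨⟨c, mem_affineSpan ℝ hc⟩,
      mem_interior_iff_mem_nhds.2 (preimage_coe_mem_nhds_subtype.2 hs), rfl⟩

section Slice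

variable {V : Type*} [NormedAddCommGroup V] [InnerProductSpace ℝ V]

theorem mem_affineSpan_iff_of_forall_inner_eq_one {G : Set V} {x : V}
    (hG : ∀ g ∈ G, ⟪g, x⟫ = 1) {z : V} :
    z ∈ affineSpan ℝ G ↔ z ∈ Submodule.span ℝ G ∧ ⟪z, x⟫ = 1 := by
  constructor
  · intro hz
    refine ⟨affineSpan_subset_span hz, ?_⟩
    let f : V →ᵃ[ℝ] ℝ := (innerₛₗ ℝ x).toAffineMap
    have hf : f '' G ⊆ {1} := by
      rintro _ ⟨g, hg, rfl⟩
      simpa [f, real_inner_comm x g] using hG g hg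
    have hfz := affineSpan_mono ℝ hf
      (AffineSubspace.map_span f G ▸ AffineSubspace.mem_map_of_mem f hz)
    rw [AffineSubspace.mem_affineSpan_singleton] at hfz
    simpa [f, real_inner_comm x z] using hfz
  · rintro ⟨hz, hz1⟩
    obtain ⟨m, a, g, rfl⟩ := Submodule.mem_span_set'.1 hz
    have hsum : ∑ i, a i = 1 := by
      simpa [sum_inner, real_inner_smul_left, hG _ (g _).2] using hz1
    rw [← Finset.univ.affineCombination_eq_linear_combination _ _ hsum]
    exact affineSpan_mono ℝ (range_subset_iff.2 fun i => (g i).2)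
      (affineCombination_mem_affineSpan hsum _)

variable {K : Set V} {x : V}

theorem subset_span_setOf_inner_eq_one (hK : ∀ c ∈ K, ∀ t : ℝ, 0 < t → t • c ∈ K)
    (hpos : ∀ c ∈ K, c ≠ 0 → 0 < ⟪c, x⟫) :
    K ⊆ Submodule.span ℝ {c ∈ K | ⟪c, x⟫ = 1} := by
  intro c hc
  rcases eq_or_ne c 0 with rfl | hc0
  · exact zero_mem _
  have hcx := hpos c hc hc0
  have hnormalized : ⟪c, x⟫⁻¹ • c ∈ {c ∈ K | ⟪c, x⟫ = 1} :=
    ⟨hK c hc _ (inv_pos.2 hcx), by rw [real_inner_smul_left, inv_mul_cancel₀ hcx.ne']⟩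
  simpa [smul_smul, mul_inv_cancel₀ hcx.ne'] using
    Submodule.smul_mem _ ⟪c, x⟫ (Submodule.subset_span hnormalized)

theorem mapsTo_inv_inner_smul_affineSpan (hK : ∀ c ∈ K, ∀ t : ℝ, 0 < t → t • c ∈ K)
    (hpos : ∀ c ∈ K, c ≠ 0 → 0 < ⟪c, x⟫) :
    MapsTo (fun y => ⟪y, x⟫⁻¹ • y) (affineSpan ℝ K ∩ {y | 0 < ⟪y, x⟫})
      (affineSpan ℝ {c ∈ K | ⟪c, x⟫ = 1}) := by
  rintro y ⟨hy, hypos : 0 < ⟪y, x⟫⟩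
  have hspan : affineSpan ℝ K ≤ (Submodule.span ℝ {c ∈ K | ⟪c, x⟫ = 1}).toAffineSubspace :=
    affineSpan_le.2 (subset_span_setOf_inner_eq_one hK hpos)
  refine (mem_affineSpan_iff_of_forall_inner_eq_one fun _ hg => hg.2).2
    ⟨Submodule.smul_mem _ _ (hspan hy), ?_⟩
  rw [real_inner_smul_left, inv_mul_cancel₀ hypos.ne']

theorem intrinsicInterior_setOf_inner_eq_one (hK : ∀ c ∈ K, ∀ t : ℝ, 0 < t → t • c ∈ K)
    (hpos : ∀ c ∈ K, c ≠ 0 → 0 < ⟪c, x⟫) :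
    intrinsicInterior ℝ {c ∈ K | ⟪c, x⟫ = 1} = {c ∈ intrinsicInterior ℝ K | ⟪c, x⟫ = 1} := by
  ext c
  simp only [mem_ofPred_eq, mem_intrinsicInterior_iff_mem_nhdsWithin]
  constructor
  · rintro ⟨⟨hcK, hc1⟩, hGnhds⟩
    refine ⟨⟨hcK, ?_⟩, hc1⟩
    set φ : V → V := fun y => ⟪y, x⟫⁻¹ • y
    have hφc : φ c = c := by simp [φ, hc1]
    have hinner : Continuous fun y : V => ⟪y, x⟫ := continuous_id.inner continuous_const
    have hφ_cont : Tendsto φ (𝓝 c) (𝓝 c) := by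
      have : ContinuousAt φ c := (hinner.continuousAt.inv₀ (by simp [hc1])).smul continuousAt_id
      rwa [ContinuousAt, hφc] at this
    have hpos_nhds : {y | 0 < ⟪y, x⟫} ∈ 𝓝[affineSpan ℝ K] c :=
      mem_nhdsWithin_of_mem_nhds
        ((isOpen_lt continuous_const hinner).mem_nhds (by simp [hc1]))
    have hφ : Tendsto φ (𝓝[affineSpan ℝ K] c) (𝓝[affineSpan ℝ {c ∈ K | ⟪c, x⟫ = 1}] c) := by
      rw [← nhdsWithin_inter_of_mem' hpos_nhds]
      exact tendsto_nhdsWithin_iff.2 ⟨hφ_cont.mono_left nhdsWithin_le_nhds,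
        eventually_nhdsWithin_of_forall (mapsTo_inv_inner_smul_affineSpan hK hpos)⟩
    filter_upwards [hφ hGnhds, hpos_nhds] with y hyG hypos
    have hy : y = ⟪y, x⟫ • φ y := by simp [φ, smul_smul, mul_inv_cancel₀ (ne_of_gt hypos)]
    rw [hy]
    exact hK _ hyG.1 _ hypos
  · rintro ⟨⟨hcK, hKnhds⟩, hc1⟩
    refine ⟨⟨hcK, hc1⟩, ?_⟩
    have hsub : (affineSpan ℝ {c ∈ K | ⟪c, x⟫ = 1} : Set V) ⊆ affineSpan ℝ K :=
      affineSpan_mono ℝ (sep_subset _ _)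
    filter_upwards [nhdsWithin_mono c hsub hKnhds, self_mem_nhdsWithin] with y hyK hy
    exact ⟨hyK, ((mem_affineSpan_iff_of_forall_inner_eq_one fun _ hg => hg.2).1 hy).2⟩

theorem mul_norm_le_of_closedBall_subset {F : Set V} {c : V} {r a : ℝ} (hr : 0 ≤ r)
    (hF : Metric.closedBall (0 : V) r ⊆ F) (h : ∀ y ∈ F, ⟪c, y⟫ ≤ a) : r * ‖c‖ ≤ a := by
  rcases eq_or_ne c 0 with rfl | hc
  · simpa using h 0 (hF (Metric.mem_closedBall_self hr))
  have hc' : 0 < ‖c‖ := norm_pos_iff.2 hc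
  have hy : (r / ‖c‖) • c ∈ Metric.closedBall (0 : V) r := by
    rw [mem_closedBall_zero_iff, norm_smul, Real.norm_of_nonneg (by positivity),
      div_mul_cancel₀ _ hc'.ne']
  calc r * ‖c‖ = ⟪c, (r / ‖c‖) • c⟫ := by
        rw [real_inner_smul_right, real_inner_self_eq_norm_mul_norm]; field_simp
    _ ≤ a := h _ (hF hy)

theorem setOf_forall_inner_smul_le {S : Set V} {c : V} {t : ℝ} (ht : 0 < t) :
    {y ∈ S | ∀ z ∈ S, ⟪t • c, z⟫ ≤ ⟪t • c, y⟫} = {y ∈ S | ∀ z ∈ S, ⟪c, z⟫ ≤ ⟪c, y⟫} := by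
  simp only [real_inner_smul_left, mul_le_mul_iff_of_pos_left ht]

end Slice

section Polar

variable {n : ℕ} {F : Set (EuclideanSpace ℝ (Fin n))} {x c c₀ : EuclideanSpace ℝ (Fin n)}

theorem mem_normalCone_iff : c ∈ normalCone F x ↔ ∀ y ∈ F, ⟪c, y⟫ ≤ ⟪c, x⟫ := by
  simp only [normalCone, mem_ofPred_eq, inner_sub_right, sub_nonpos]

theorem smul_mem_normalCone {t : ℝ} (ht : 0 ≤ t) (hc : c ∈ normalCone F x) :
    t • c ∈ normalCone F x := by
  simp only [mem_normalCone_iff, real_inner_smul_left] at hc ⊢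
  exact fun y hy => mul_le_mul_of_nonneg_left (hc y hy) ht

theorem inner_pos_of_mem_normalCone (h0 : (0 : EuclideanSpace ℝ (Fin n)) ∈ interior F)
    (hc : c ∈ normalCone F x) (hc0 : c ≠ 0) : 0 < ⟪c, x⟫ := by
  obtain ⟨r, hr, hrF⟩ := Metric.nhds_basis_closedBall.mem_iff.1 (mem_interior_iff_mem_nhds.1 h0)
  have := mul_norm_le_of_closedBall_subset hr.le hrF (mem_normalCone_iff.1 hc)
  have : 0 < r * ‖c‖ := mul_pos hr (norm_pos_iff.2 hc0)
  linarith

theorem exists_mem_normalCone_inner_eq_one (hconv : Convex ℝ F)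
    (h0 : (0 : EuclideanSpace ℝ (Fin n)) ∈ interior F) (hx : x ∉ interior F) :
    ∃ c ∈ normalCone F x, ⟪c, x⟫ = 1 := by
  obtain ⟨f, hf0, hf⟩ := geometric_hahn_banach_of_nonempty_interior_point hconv hx ⟨0, h0⟩
  set v := (InnerProductSpace.toDual ℝ (EuclideanSpace ℝ (Fin n))).symm f
  have hv : v ∈ normalCone F x :=
    mem_normalCone_iff.2 fun y hy => by simpa [v, InnerProductSpace.toDual_symm_apply] using hf y hy
  have hv0 : v ≠ 0 := by simpa [v] using hf0
  have hvx := inner_pos_of_mem_normalCone h0 hv hv0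
  exact ⟨⟪v, x⟫⁻¹ • v, smul_mem_normalCone (inv_nonneg.2 hvx.le) hv,
    by rw [real_inner_smul_left, inv_mul_cancel₀ hvx.ne']⟩

theorem zero_mem_polarSet : (0 : EuclideanSpace ℝ (Fin n)) ∈ polarSet F := fun y _ => by
  simp

theorem isClosed_polarSet : IsClosed (polarSet F) := by
  simp only [polarSet, ofPred_forall]
  exact isClosed_biInter fun y _ =>
    isClosed_le (continuous_id.inner continuous_const) continuous_const

theorem isCompact_polarSet (h0 : (0 : EuclideanSpace ℝ (Fin n)) ∈ interior F) :
    IsCompact (polarSet F) := by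
  obtain ⟨r, hr, hrF⟩ := Metric.nhds_basis_closedBall.mem_iff.1 (mem_interior_iff_mem_nhds.1 h0)
  refine (isCompact_closedBall 0 r⁻¹).of_isClosed_subset isClosed_polarSet fun c hc => ?_
  rw [mem_closedBall_zero_iff, ← mul_one r⁻¹, le_inv_mul_iff₀ hr]
  exact mul_norm_le_of_closedBall_subset hr.le hrF hc

theorem exists_pos_smul_mem_polarSet (hF : Bornology.IsBounded F) (c : EuclideanSpace ℝ (Fin n)) :
    ∃ t > (0 : ℝ), t • c ∈ polarSet F := by
  obtain ⟨R, hR, hFR⟩ := hF.subset_closedBall_lt 0 0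
  refine ⟨(R * ‖c‖ + 1)⁻¹, by positivity, fun y hy => ?_⟩
  rw [real_inner_smul_left, inv_mul_le_iff₀ (by positivity), mul_one]
  calc ⟪c, y⟫ ≤ ‖c‖ * ‖y‖ := real_inner_le_norm c y
    _ ≤ ‖c‖ * R := by gcongr; exact mem_closedBall_zero_iff.1 (hFR hy)
    _ ≤ R * ‖c‖ + 1 := by linarith [mul_comm ‖c‖ R]

theorem mem_of_forall_polarSet_inner_le_one (hcl : IsClosed F) (hconv : Convex ℝ F)
    (h0 : (0 : EuclideanSpace ℝ (Fin n)) ∈ F) (hx : ∀ c ∈ polarSet F, ⟪c, x⟫ ≤ 1) : x ∈ F := by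
  by_contra hxF
  obtain ⟨f, u, hfF, hux⟩ := geometric_hahn_banach_closed_point hconv hcl hxF
  have hu : 0 < u := by simpa using hfF 0 h0
  set c := u⁻¹ • (InnerProductSpace.toDual ℝ (EuclideanSpace ℝ (Fin n))).symm f
  have hc : ∀ y, ⟪c, y⟫ = u⁻¹ * f y := fun y => by
    simp [c, real_inner_smul_left, InnerProductSpace.toDual_symm_apply]
  have hcx := hx c fun y hy => by rw [hc, inv_mul_le_iff₀ hu, mul_one]; exact (hfF y hy).le
  rw [hc, inv_mul_le_iff₀ hu, mul_one] at hcx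
  linarith

theorem inner_lt_one_of_mem_interior (hc : c ∈ polarSet F) (hx : x ∈ interior F) :
    ⟪c, x⟫ < 1 := by
  have hscaled : ∀ᶠ t in 𝓝 (1 : ℝ), t • x ∈ F :=
    (continuous_id.smul continuous_const).continuousAt.preimage_mem_nhds
      (by simpa using mem_interior_iff_mem_nhds.1 hx)
  obtain ⟨t, htF, ht1 : 1 < t⟩ :=
    ((hscaled.filter_mono nhdsWithin_le_nhds).and (self_mem_nhdsWithin (s := Ioi 1))).exists
  have := hc _ htF
  rw [real_inner_smul_right] at this
  nlinarith

theorem setOf_polarSet_inner_eq_one :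
    {c ∈ polarSet F | ⟪c, x⟫ = 1} = {c ∈ normalCone F x | ⟪c, x⟫ = 1} := by
  ext c
  simp only [mem_ofPred_eq, mem_normalCone_iff]
  exact and_congr_left fun h1 => by rw [h1]; rfl

theorem setOf_normalCone_inner_eq_one_ne_polarSet :
    {c ∈ normalCone F x | ⟪c, x⟫ = 1} ≠ polarSet F := fun h => by
  have h0 : (0 : EuclideanSpace ℝ (Fin n)) ∈ {c ∈ normalCone F x | ⟪c, x⟫ = 1} :=
    h ▸ zero_mem_polarSet
  simp at h0

theorem exposedFace_polarSet_eq (hc₀ : c₀ ∈ polarSet F) (hc₀x : ⟪c₀, x⟫ = 1) (hx : x ∈ F) :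
    {y ∈ polarSet F | ∀ z ∈ polarSet F, ⟪x, z⟫ ≤ ⟪x, y⟫} = {c ∈ normalCone F x | ⟪c, x⟫ = 1} := by
  rw [← setOf_polarSet_inner_eq_one]
  ext y
  simp only [mem_ofPred_eq]
  refine and_congr_right fun hy => ⟨fun hmax => le_antisymm (hy x hx) ?_, fun hy1 z hz => ?_⟩
  · have := hmax c₀ hc₀
    rwa [← real_inner_comm x c₀, ← real_inner_comm x y, hc₀x] at this
  · rw [← real_inner_comm x z, ← real_inner_comm x y, hy1]
    exact hz x hx

theorem exists_mem_frontier_of_exposedFace_polarSet_ne (hcomp : IsCompact F)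
    (hconv : Convex ℝ F) (h0 : (0 : EuclideanSpace ℝ (Fin n)) ∈ interior F)
    (hne : {y ∈ polarSet F | ∀ z ∈ polarSet F, ⟪c, z⟫ ≤ ⟪c, y⟫} ≠ polarSet F) :
    ∃ x ∈ frontier F,
      {y ∈ polarSet F | ∀ z ∈ polarSet F, ⟪c, z⟫ ≤ ⟪c, y⟫} = {c ∈ normalCone F x | ⟪c, x⟫ = 1} := by
  have hc0 : c ≠ 0 := by rintro rfl; exact hne (by simp)
  obtain ⟨y₀, hy₀, hmax⟩ := (isCompact_polarSet h0).exists_isMaxOn ⟨0, zero_mem_polarSet⟩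
    (continuous_const.inner continuous_id : Continuous fun y => ⟪c, y⟫).continuousOn
  set M := ⟪c, y₀⟫
  have hM : 0 < M := by
    obtain ⟨t, ht, htc⟩ := exists_pos_smul_mem_polarSet hcomp.isBounded c
    calc 0 < t * (‖c‖ * ‖c‖) := by have := norm_pos_iff.2 hc0; positivity
      _ = ⟪c, t • c⟫ := by rw [real_inner_smul_right, real_inner_self_eq_norm_mul_norm]
      _ ≤ M := hmax htc
  set x := M⁻¹ • c
  have hx : ∀ z, ⟪z, x⟫ = M⁻¹ * ⟪c, z⟫ := fun z => by rw [real_inner_smul_right, real_inner_comm]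
  have hxF : x ∈ F := mem_of_forall_polarSet_inner_le_one hcomp.isClosed hconv
    (interior_subset h0) fun z hz => by rw [hx, inv_mul_le_iff₀ hM, mul_one]; exact hmax hz
  have hy₀x : ⟪y₀, x⟫ = 1 := by rw [hx, inv_mul_cancel₀ hM.ne']
  refine ⟨x, ?_, ?_⟩
  · rw [hcomp.isClosed.frontier_eq]
    exact ⟨hxF, fun hint => (inner_lt_one_of_mem_interior hy₀ hint).ne hy₀x⟩
  · rw [← exposedFace_polarSet_eq hy₀ hy₀x hxF, setOf_forall_inner_smul_le (inv_pos.2 hM)]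

end Polar

/-- Suppose `0` lies in the interior of the compact convex set `F ⊆ ℝⁿ`.  Then the proper
exposed faces of the polar `F°` are exactly the sets `G = {c ∈ N_F(x) : ⟨c, x⟩ = 1}` for
`x` on the boundary of `F`; moreover any such face has relative interior
`ri G = {c ∈ ri N_F(x) : ⟨c, x⟩ = 1}`. -/
theorem stmt11 {n : ℕ} (F : Set (EuclideanSpace ℝ (Fin n)))
    (hcomp : IsCompact F) (hconv : Convex ℝ F) (h0 : (0 : EuclideanSpace ℝ (Fin n)) ∈ interior F) :
    (∀ G : Set (EuclideanSpace ℝ (Fin n)),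
      ((∃ c : EuclideanSpace ℝ (Fin n),
          G = {y ∈ polarSet F | ∀ z ∈ polarSet F, (inner ℝ c z : ℝ) ≤ inner ℝ c y}) ∧
        G ≠ polarSet F) ↔
      (∃ x ∈ frontier F, G = {c ∈ normalCone F x | (inner ℝ c x : ℝ) = 1})) ∧
    (∀ x ∈ frontier F,
      intrinsicInterior ℝ {c ∈ normalCone F x | (inner ℝ c x : ℝ) = 1} =
        {c ∈ intrinsicInterior ℝ (normalCone F x) | (inner ℝ c x : ℝ) = 1}) := by
  refine ⟨fun G => ⟨?_, ?_⟩, fun x _ => ?_⟩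
  · rintro ⟨⟨c, rfl⟩, hne⟩
    exact exists_mem_frontier_of_exposedFace_polarSet_ne hcomp hconv h0 hne
  · rintro ⟨x, hx, rfl⟩
    have hxF : x ∈ F := hcomp.isClosed.frontier_subset hx
    obtain ⟨c₀, hc₀, hc₀x⟩ := exists_mem_normalCone_inner_eq_one hconv h0 hx.2
    have hc₀F : c₀ ∈ {c ∈ polarSet F | ⟪c, x⟫ = 1} := by
      rw [setOf_polarSet_inner_eq_one]; exact ⟨hc₀, hc₀x⟩
    exact ⟨⟨x, (exposedFace_polarSet_eq hc₀F.1 hc₀x hxF).symm⟩,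
      setOf_normalCone_inner_eq_one_ne_polarSet⟩
  · exact intrinsicInterior_setOf_inner_eq_one (fun c hc t ht => smul_mem_normalCone ht.le hc)
      fun c hc hc0 => inner_pos_of_mem_normalCone h0 hc hc0
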